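/- The algebra A of parenthesized words, equipped with the product m, unit E, coproduct Δ and counit ē, is a commutative ℚ-bialgebra: Δ and ē are unital algebra homomorphisms, Δ is coassociative, and the counit axioms (id_A ⊗ ē)Δ = id_A = (ē ⊗ id_A)Δ hold. -/

import Mathlib

set_option synthInstance.maxHeartbeats 400000
set_option maxHeartbeats 1000000


open scoped TensorProduct

/-- Rooted trees with vertices labeled by letters `x_i` (`i : ℕ`): an irreducible
parenthesized word `(X x_i)` is a root labeled `x_i` with the forest `X` attached. -/
inductive PTree : Type
  | node : ℕ → List PTree → PTree

/-- Parenthesized words: finite commutative products (multisets) of irreducible words. -/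
abbrev Word : Type := Multiset PTree

/-- The free ℚ-vector space `A` on parenthesized words, as a commutative unital
associative ℚ-algebra (the product is induced by the product of words, the unit is the
empty word `e = word 0`). -/
abbrev A : Type := AddMonoidAlgebra ℚ Word

/-- The basis vector of `A` corresponding to a parenthesized word. -/
noncomputable def word (m : Word) : A := AddMonoidAlgebra.single m 1

/-- The grafting operator `B_{(x_i)}`, sending a word `X` to `(X x_i)`. -/
noncomputable def B (i : ℕ) : A →ₗ[ℚ] A :=
  AddMonoidAlgebra.mapDomainLinearMap ℚ ℚ (fun m : Word => ({PTree.node i m.toList} : Word))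

/-- The counit `ē : A → ℚ`, killing every nonempty word and sending `e` to `1`. -/
noncomputable def ebar : A →ₗ[ℚ] ℚ :=
  Finsupp.lapply 0 ∘ₗ (AddMonoidAlgebra.coeffLinearEquiv ℚ).toLinearMap

/-- The unit map `E : ℚ → A`, `q ↦ q • e`. -/
noncomputable def Eu : ℚ →ₗ[ℚ] A := AddMonoidAlgebra.lsingle 0

/-- The projection `P₁ = id_A − E ∘ ē`. -/
noncomputable def P1 : A →ₗ[ℚ] A := LinearMap.id - Eu.comp ebar

open scoped Classical

lemma fs_eq (m : Word) (q : ℚ) : (AddMonoidAlgebra.single m q : A) = AddMonoidAlgebra.single m q := rfl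

lemma ebar_single (X : Word) (q : ℚ) : ebar (AddMonoidAlgebra.single X q) = if X = 0 then q else 0 := by
  show (Finsupp.single X q : Word →₀ ℚ) 0 = _
  rw [Finsupp.single_apply]
lemma ebar_word0 : ebar (word 0) = 1 := by simp [word, ebar_single]
lemma ebar_Eu (q : ℚ) : ebar (Eu q) = q := by
  show ebar (AddMonoidAlgebra.single 0 q) = q
  simp [ebar_single]
lemma ebar_P1 (a : A) : ebar (P1 a) = 0 := by
  simp [P1, LinearMap.sub_apply, map_sub, ebar_Eu]
lemma ebar_mul : ∀ a b : A, ebar (a * b) = ebar a * ebar b := by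
  intro a b
  induction a using AddMonoidAlgebra.induction_linear with
  | zero => simp
  | add f g hf hg => simp [add_mul, hf, hg]
  | single m q =>
    induction b using AddMonoidAlgebra.induction_linear with
    | zero => simp
    | add f g hf hg => simp [mul_add, hf, hg]
    | single m' q' =>
      rw [fs_eq, fs_eq, AddMonoidAlgebra.single_mul_single, ← fs_eq, ← fs_eq, ← fs_eq,
        ebar_single, ebar_single, ebar_single]
      by_cases h : m = 0 <;> by_cases h' : m' = 0 <;>
        simp [h, h', add_eq_zero]
lemma B_word (i : ℕ) (m : Word) : B i (word m) = word {PTree.node i m.toList} := by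
  rw [word, B]
  rw [AddMonoidAlgebra.mapDomainLinearMap_single, word]
lemma ebar_B (i : ℕ) (a : A) : ebar (B i a) = 0 := by
  induction a using AddMonoidAlgebra.induction_linear with
  | zero => simp
  | add f g hf hg => simp [map_add, hf, hg]
  | single m q =>
    rw [B]
    rw [AddMonoidAlgebra.mapDomainLinearMap_single, ebar_single]
    simp
lemma word_mul (X Y : Word) : word X * word Y = word (X + Y) := by
  rw [word, word, word, fs_eq, fs_eq, fs_eq, AddMonoidAlgebra.single_mul_single, mul_one]
lemma single_eq_smul (m : Word) (q : ℚ) : (AddMonoidAlgebra.single m q : A) = q • word m := by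
  simp [word, AddMonoidAlgebra.smul_single']
lemma P1_apply (a : A) : P1 a = a - Eu (ebar a) := by simp [P1]

open TensorProduct

lemma one_eq_word : (1 : A) = word 0 := rfl

lemma Dmul (Δ : A →ₗ[ℚ] A ⊗[ℚ] A)
    (hΔm : ∀ X Y : Word, Δ (word X * word Y) = Δ (word X) * Δ (word Y)) :
    ∀ a b : A, Δ (a * b) = Δ a * Δ b := by
  intro a b
  induction a using AddMonoidAlgebra.induction_linear with
  | zero => simp
  | add f g hf hg => simp [add_mul, hf, hg]
  | single m q =>
    induction b using AddMonoidAlgebra.induction_linear with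
    | zero => simp
    | add f g hf hg => simp [mul_add, hf, hg]
    | single m' q' =>
      rw [single_eq_smul, single_eq_smul, smul_mul_assoc, mul_smul_comm, map_smul, map_smul,
        map_smul, map_smul, hΔm, smul_mul_assoc, mul_smul_comm]

noncomputable def ebarAlg : A →ₐ[ℚ] ℚ :=
  AlgHom.ofLinearMap ebar (by rw [one_eq_word, ebar_word0]) (fun a b => ebar_mul a b)

noncomputable def DAlg (Δ : A →ₗ[ℚ] A ⊗[ℚ] A)
    (hΔe : Δ (word 0) = word 0 ⊗ₜ[ℚ] word 0)
    (hΔm : ∀ X Y : Word, Δ (word X * word Y) = Δ (word X) * Δ (word Y)) :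
    A →ₐ[ℚ] A ⊗[ℚ] A :=
  AlgHom.ofLinearMap Δ
    (by rw [one_eq_word, hΔe, Algebra.TensorProduct.one_def, one_eq_word]) (Dmul Δ hΔm)

lemma algMap_apply {BB CC DD EE : Type} [Ring BB] [Ring CC] [Ring DD] [Ring EE]
    [Algebra ℚ BB] [Algebra ℚ CC] [Algebra ℚ DD] [Algebra ℚ EE]
    (f : BB →ₐ[ℚ] DD) (g : CC →ₐ[ℚ] EE) (x : BB ⊗[ℚ] CC) :
    Algebra.TensorProduct.map f g x = TensorProduct.map f.toLinearMap g.toLinearMap x := by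
  induction x using TensorProduct.induction_on with
  | zero => simp
  | tmul a b => simp
  | add x y hx hy => rw [map_add, map_add, hx, hy]

lemma ebar_word_ne (X : Word) (h : X ≠ 0) : ebar (word X) = 0 := by
  rw [word, ebar_single, if_neg h]

lemma map_ebar_id_idB_P1 (i : ℕ) (w : A ⊗[ℚ] A) :
    TensorProduct.map ebar LinearMap.id
      (TensorProduct.map LinearMap.id (B i) (TensorProduct.map P1 LinearMap.id w)) = 0 := by
  induction w using TensorProduct.induction_on with
  | zero => rw [LinearMap.map_zero, LinearMap.map_zero, LinearMap.map_zero]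
  | tmul a b =>
    simp only [TensorProduct.map_tmul, LinearMap.id_apply, ebar_P1, TensorProduct.zero_tmul]
  | add x y hx hy => simp only [map_add, hx, hy, add_zero]

lemma map_id_ebar_idB (i : ℕ) (w : A ⊗[ℚ] A) :
    TensorProduct.map LinearMap.id ebar (TensorProduct.map LinearMap.id (B i) w) = 0 := by
  induction w using TensorProduct.induction_on with
  | zero => rw [LinearMap.map_zero, LinearMap.map_zero]
  | tmul a b =>
    simp only [TensorProduct.map_tmul, LinearMap.id_apply, ebar_B, TensorProduct.tmul_zero]
  | add x y hx hy => simp only [map_add, hx, hy, add_zero]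

lemma left_counit (Δ : A →ₗ[ℚ] A ⊗[ℚ] A)
    (hΔe : Δ (word 0) = word 0 ⊗ₜ[ℚ] word 0)
    (hΔB : ∀ (i : ℕ) (l : List PTree),
      Δ (word {PTree.node i l}) =
        word {PTree.node i l} ⊗ₜ[ℚ] word 0 + word 0 ⊗ₜ[ℚ] word {PTree.node i l} +
          TensorProduct.map LinearMap.id (B i)
            (TensorProduct.map P1 LinearMap.id (Δ (word (l : Multiset PTree)))))
    (hΔm : ∀ X Y : Word, Δ (word X * word Y) = Δ (word X) * Δ (word Y)) :
    ∀ a : A, TensorProduct.lid ℚ A (TensorProduct.map ebar LinearMap.id (Δ a)) = a := by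
  set L : A →ₐ[ℚ] A :=
    ((Algebra.TensorProduct.lid ℚ A).toAlgHom.comp
      ((Algebra.TensorProduct.map ebarAlg (AlgHom.id ℚ A)).comp (DAlg Δ hΔe hΔm))) with hL
  have hbridge : ∀ a : A, L a = TensorProduct.lid ℚ A (TensorProduct.map ebar LinearMap.id (Δ a)) := by
    intro a
    rw [hL]
    simp only [AlgHom.coe_comp, Function.comp_apply, AlgEquiv.toAlgHom_eq_coe, AlgHom.coe_coe]
    rw [show (DAlg Δ hΔe hΔm) a = Δ a from rfl, algMap_apply]
    rw [show ebarAlg.toLinearMap = ebar from rfl, show (AlgHom.id ℚ A).toLinearMap = LinearMap.id from rfl]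
    exact (show ∀ y : ℚ ⊗[ℚ] A, Algebra.TensorProduct.lid ℚ A y = TensorProduct.lid ℚ A y from
      fun y => by rw [← Algebra.TensorProduct.lid_toLinearEquiv]; rfl) _
  have hword : ∀ X : Word, L (word X) = word X := by
    intro X
    induction X using Multiset.induction with
    | empty => rw [show word (0 : Word) = 1 from rfl, map_one]
    | cons a s ih =>
      rw [← Multiset.singleton_add, ← word_mul, map_mul, ih]
      congr 1
      rcases a with ⟨i, l⟩
      rw [hbridge, hΔB]
      simp only [map_add, TensorProduct.map_tmul, LinearMap.id_apply, map_ebar_id_idB_P1,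
        map_zero, add_zero, ebar_word0, ebar_word_ne {PTree.node i l} (by simp), TensorProduct.zero_tmul,
        zero_add, TensorProduct.lid_tmul, one_smul]
  intro a
  rw [← hbridge]
  induction a using AddMonoidAlgebra.induction_linear with
  | zero => simp
  | add f g hf hg => rw [map_add, hf, hg]
  | single m q => rw [single_eq_smul, map_smul, hword]

lemma right_counit (Δ : A →ₗ[ℚ] A ⊗[ℚ] A)
    (hΔe : Δ (word 0) = word 0 ⊗ₜ[ℚ] word 0)
    (hΔB : ∀ (i : ℕ) (l : List PTree),
      Δ (word {PTree.node i l}) =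
        word {PTree.node i l} ⊗ₜ[ℚ] word 0 + word 0 ⊗ₜ[ℚ] word {PTree.node i l} +
          TensorProduct.map LinearMap.id (B i)
            (TensorProduct.map P1 LinearMap.id (Δ (word (l : Multiset PTree)))))
    (hΔm : ∀ X Y : Word, Δ (word X * word Y) = Δ (word X) * Δ (word Y)) :
    ∀ a : A, TensorProduct.rid ℚ A (TensorProduct.map LinearMap.id ebar (Δ a)) = a := by
  set L : A →ₐ[ℚ] A :=
    ((Algebra.TensorProduct.rid ℚ ℚ A).toAlgHom.comp
      ((Algebra.TensorProduct.map (AlgHom.id ℚ A) ebarAlg).comp (DAlg Δ hΔe hΔm))) with hL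
  have hbridge : ∀ a : A, L a = TensorProduct.rid ℚ A (TensorProduct.map LinearMap.id ebar (Δ a)) := by
    intro a
    rw [hL]
    simp only [AlgHom.coe_comp, Function.comp_apply, AlgEquiv.toAlgHom_eq_coe, AlgHom.coe_coe]
    rw [show (DAlg Δ hΔe hΔm) a = Δ a from rfl, algMap_apply]
    rw [show ebarAlg.toLinearMap = ebar from rfl, show (AlgHom.id ℚ A).toLinearMap = LinearMap.id from rfl]
    exact (show ∀ y : A ⊗[ℚ] ℚ, Algebra.TensorProduct.rid ℚ ℚ A y = TensorProduct.rid ℚ A y from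
      fun y => by
        induction y using TensorProduct.induction_on with
        | zero => simp
        | tmul a q => rw [Algebra.TensorProduct.rid_tmul, TensorProduct.rid_tmul]
        | add x y hx hy => rw [map_add, map_add, hx, hy]) _
  have hword : ∀ X : Word, L (word X) = word X := by
    intro X
    induction X using Multiset.induction with
    | empty => rw [show word (0 : Word) = 1 from rfl, map_one]
    | cons a s ih =>
      rw [← Multiset.singleton_add, ← word_mul, map_mul, ih]
      congr 1
      rcases a with ⟨i, l⟩
      rw [hbridge, hΔB]
      simp only [map_add, TensorProduct.map_tmul, LinearMap.id_apply, map_id_ebar_idB,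
        map_zero, add_zero, ebar_word0, ebar_word_ne {PTree.node i l} (by simp),
        TensorProduct.tmul_zero, zero_add, TensorProduct.rid_tmul, one_smul]
  intro a
  rw [← hbridge]
  induction a using AddMonoidAlgebra.induction_linear with
  | zero => simp
  | add f g hf hg => rw [map_add, hf, hg]
  | single m q => rw [single_eq_smul, map_smul, hword]

noncomputable def wsize (X : Word) : ℕ := (X.map (fun t => SizeOf.sizeOf t)).sum

lemma wsize_cons (a : PTree) (s : Word) : wsize (a ::ₘ s) = SizeOf.sizeOf a + wsize s := by
  simp [wsize]

lemma wsize_coe (L : List PTree) : wsize (↑L : Word) = (L.map (fun t => SizeOf.sizeOf t)).sum := by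
  simp [wsize]

lemma list_sizes_lt (L : List PTree) : (L.map (fun t => SizeOf.sizeOf t)).sum < SizeOf.sizeOf L := by
  induction L with
  | nil => simp
  | cons a t ih => simp only [List.map_cons, List.sum_cons, List.cons.sizeOf_spec]; omega

lemma wsize_lt (i : ℕ) (L : List PTree) :
    wsize (↑L : Word) < SizeOf.sizeOf (PTree.node i L) := by
  rw [wsize_coe]
  have := list_sizes_lt L
  simp only [PTree.node.sizeOf_spec]
  omega

lemma tmap_tmap {M₁ M₂ M₃ N₁ N₂ N₃ : Type*}
    [AddCommMonoid M₁] [AddCommMonoid M₂] [AddCommMonoid M₃]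
    [AddCommMonoid N₁] [AddCommMonoid N₂] [AddCommMonoid N₃]
    [Module ℚ M₁] [Module ℚ M₂] [Module ℚ M₃] [Module ℚ N₁] [Module ℚ N₂] [Module ℚ N₃]
    (f₂ : M₂ →ₗ[ℚ] M₃) (g₂ : N₂ →ₗ[ℚ] N₃) (f₁ : M₁ →ₗ[ℚ] M₂) (g₁ : N₁ →ₗ[ℚ] N₂)
    (x : M₁ ⊗[ℚ] N₁) :
    TensorProduct.map f₂ g₂ (TensorProduct.map f₁ g₁ x)
      = TensorProduct.map (f₂ ∘ₗ f₁) (g₂ ∘ₗ g₁) x := by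
  rw [TensorProduct.map_comp]; rfl

lemma Eu_eq (q : ℚ) : Eu q = q • word 0 := by
  show (AddMonoidAlgebra.single 0 q : A) = q • word 0
  rw [single_eq_smul]

lemma mapEu (v : ℚ ⊗[ℚ] A) :
    TensorProduct.map Eu LinearMap.id v = word 0 ⊗ₜ[ℚ] (TensorProduct.lid ℚ A v) := by
  induction v using TensorProduct.induction_on with
  | zero => simp
  | tmul q a =>
    rw [TensorProduct.map_tmul, LinearMap.id_apply, Eu_eq, TensorProduct.lid_tmul,
      TensorProduct.smul_tmul]
  | add x y hx hy => rw [map_add, map_add, hx, hy, TensorProduct.tmul_add]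

lemma F1 (Δ : A →ₗ[ℚ] A ⊗[ℚ] A)
    (hΔe : Δ (word 0) = word 0 ⊗ₜ[ℚ] word 0)
    (hΔB : ∀ (i : ℕ) (l : List PTree),
      Δ (word {PTree.node i l}) =
        word {PTree.node i l} ⊗ₜ[ℚ] word 0 + word 0 ⊗ₜ[ℚ] word {PTree.node i l} +
          TensorProduct.map LinearMap.id (B i)
            (TensorProduct.map P1 LinearMap.id (Δ (word (l : Multiset PTree)))))
    (hΔm : ∀ X Y : Word, Δ (word X * word Y) = Δ (word X) * Δ (word Y)) :
    ∀ a : A, TensorProduct.map (Eu ∘ₗ ebar) LinearMap.id (Δ a) = word 0 ⊗ₜ[ℚ] a := by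
  intro a
  have h := tmap_tmap Eu (LinearMap.id : A →ₗ[ℚ] A) ebar (LinearMap.id : A →ₗ[ℚ] A) (Δ a)
  rw [LinearMap.id_comp] at h
  rw [← h, mapEu, left_counit Δ hΔe hΔB hΔm]

lemma mapP1_sub (v : A ⊗[ℚ] A) :
    TensorProduct.map P1 LinearMap.id v = v - TensorProduct.map (Eu ∘ₗ ebar) LinearMap.id v := by
  induction v using TensorProduct.induction_on with
  | zero => simp
  | tmul a b =>
    rw [TensorProduct.map_tmul, TensorProduct.map_tmul, LinearMap.id_apply, P1_apply,
      TensorProduct.sub_tmul, LinearMap.comp_apply]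
  | add x y hx hy =>
    rw [map_add, map_add, hx, hy]; abel

lemma gD (Δ : A →ₗ[ℚ] A ⊗[ℚ] A)
    (hΔe : Δ (word 0) = word 0 ⊗ₜ[ℚ] word 0)
    (hΔB : ∀ (i : ℕ) (l : List PTree),
      Δ (word {PTree.node i l}) =
        word {PTree.node i l} ⊗ₜ[ℚ] word 0 + word 0 ⊗ₜ[ℚ] word {PTree.node i l} +
          TensorProduct.map LinearMap.id (B i)
            (TensorProduct.map P1 LinearMap.id (Δ (word (l : Multiset PTree)))))
    (hΔm : ∀ X Y : Word, Δ (word X * word Y) = Δ (word X) * Δ (word Y)) :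
    ∀ a : A, TensorProduct.map P1 LinearMap.id (Δ a) = Δ a - word 0 ⊗ₜ[ℚ] a := by
  intro a
  rw [mapP1_sub, F1 Δ hΔe hΔB hΔm]

lemma assoc_tmul_right (w : A ⊗[ℚ] A) (c : A) :
    TensorProduct.assoc ℚ A A A (w ⊗ₜ[ℚ] c)
      = TensorProduct.map LinearMap.id ((TensorProduct.mk ℚ A A).flip c) w := by
  induction w using TensorProduct.induction_on with
  | zero => simp
  | tmul a b =>
    rw [TensorProduct.assoc_tmul, TensorProduct.map_tmul, LinearMap.id_apply,
      LinearMap.flip_apply, TensorProduct.mk_apply]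
  | add x y hx hy => rw [TensorProduct.add_tmul, map_add, map_add, hx, hy]

lemma DB_eq (Δ : A →ₗ[ℚ] A ⊗[ℚ] A)
    (hΔB : ∀ (i : ℕ) (l : List PTree),
      Δ (word {PTree.node i l}) =
        word {PTree.node i l} ⊗ₜ[ℚ] word 0 + word 0 ⊗ₜ[ℚ] word {PTree.node i l} +
          TensorProduct.map LinearMap.id (B i)
            (TensorProduct.map P1 LinearMap.id (Δ (word (l : Multiset PTree)))))
    (i : ℕ) :
    Δ ∘ₗ B i = ((TensorProduct.mk ℚ A A).flip (word 0)) ∘ₗ B i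
      + (TensorProduct.mk ℚ A A (word 0)) ∘ₗ B i
      + (TensorProduct.map LinearMap.id (B i)) ∘ₗ (TensorProduct.map P1 LinearMap.id) ∘ₗ Δ := by
  apply AddMonoidAlgebra.lhom_ext'
  intro m
  apply LinearMap.ext
  intro q
  have hm : ((m.toList : Multiset PTree) : Word) = m := Multiset.coe_toList m
  simp only [LinearMap.comp_apply, LinearMap.add_apply, AddMonoidAlgebra.lsingle_apply]
  rw [single_eq_smul]
  simp only [map_smul]
  rw [← smul_add, ← smul_add]
  congr 1
  show Δ (B i (word m)) = ((TensorProduct.mk ℚ A A).flip (word 0)) (B i (word m))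
      + (TensorProduct.mk ℚ A A (word 0)) (B i (word m))
      + (TensorProduct.map LinearMap.id (B i)) ((TensorProduct.map P1 LinearMap.id) (Δ (word m)))
  rw [B_word i m, hΔB i m.toList, hm, LinearMap.flip_apply, TensorProduct.mk_apply,
    TensorProduct.mk_apply, ← B_word i m]

lemma assoc_alg_eq (y : (A ⊗[ℚ] A) ⊗[ℚ] A) :
    Algebra.TensorProduct.assoc ℚ ℚ ℚ A A A y = TensorProduct.assoc ℚ A A A y := by
  induction y using TensorProduct.induction_on with
  | zero => simp
  | tmul x c =>
    induction x using TensorProduct.induction_on with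
    | zero => simp
    | tmul a b => rfl
    | add x1 x2 h1 h2 => rw [TensorProduct.add_tmul, map_add, map_add, h1, h2]
  | add x y hx hy => rw [map_add, map_add, hx, hy]

section
variable (Δ : A →ₗ[ℚ] A ⊗[ℚ] A)
  (hΔe : Δ (word 0) = word 0 ⊗ₜ[ℚ] word 0)
  (hΔm : ∀ X Y : Word, Δ (word X * word Y) = Δ (word X) * Δ (word Y))

include hΔe hΔm in
lemma Lmul (x y : A) :
    TensorProduct.assoc ℚ A A A (TensorProduct.map Δ LinearMap.id (Δ (x * y)))
      = TensorProduct.assoc ℚ A A A (TensorProduct.map Δ LinearMap.id (Δ x))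
        * TensorProduct.assoc ℚ A A A (TensorProduct.map Δ LinearMap.id (Δ y)) := by
  set L : A →ₐ[ℚ] A ⊗[ℚ] (A ⊗[ℚ] A) :=
    (Algebra.TensorProduct.assoc ℚ ℚ ℚ A A A).toAlgHom.comp
      ((Algebra.TensorProduct.map (DAlg Δ hΔe hΔm) (AlgHom.id ℚ A)).comp (DAlg Δ hΔe hΔm))
      with hLdef
  have hbridge : ∀ a : A,
      L a = TensorProduct.assoc ℚ A A A (TensorProduct.map Δ LinearMap.id (Δ a)) := by
    intro a
    rw [hLdef]
    simp only [AlgHom.coe_comp, Function.comp_apply, AlgEquiv.toAlgHom_eq_coe, AlgHom.coe_coe]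
    rw [show (DAlg Δ hΔe hΔm) a = Δ a from rfl, algMap_apply,
      show (DAlg Δ hΔe hΔm).toLinearMap = Δ from rfl,
      show (AlgHom.id ℚ A).toLinearMap = LinearMap.id from rfl]
    exact assoc_alg_eq _
  rw [← hbridge, ← hbridge, ← hbridge, map_mul]

include hΔe hΔm in
lemma Rmul (x y : A) :
    TensorProduct.map LinearMap.id Δ (Δ (x * y))
      = TensorProduct.map LinearMap.id Δ (Δ x) * TensorProduct.map LinearMap.id Δ (Δ y) := by
  set L : A →ₐ[ℚ] A ⊗[ℚ] (A ⊗[ℚ] A) :=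
    (Algebra.TensorProduct.map (AlgHom.id ℚ A) (DAlg Δ hΔe hΔm)).comp (DAlg Δ hΔe hΔm)
      with hLdef
  have hbridge : ∀ a : A, L a = TensorProduct.map LinearMap.id Δ (Δ a) := by
    intro a
    rw [hLdef]
    simp only [AlgHom.coe_comp, Function.comp_apply]
    rw [show (DAlg Δ hΔe hΔm) a = Δ a from rfl, algMap_apply,
      show (DAlg Δ hΔe hΔm).toLinearMap = Δ from rfl,
      show (AlgHom.id ℚ A).toLinearMap = LinearMap.id from rfl]
  rw [← hbridge, ← hbridge, ← hbridge, map_mul]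

end

section
variable (Δ : A →ₗ[ℚ] A ⊗[ℚ] A)
  (hΔe : Δ (word 0) = word 0 ⊗ₜ[ℚ] word 0)
  (hΔB : ∀ (i : ℕ) (l : List PTree),
    Δ (word {PTree.node i l}) =
      word {PTree.node i l} ⊗ₜ[ℚ] word 0 + word 0 ⊗ₜ[ℚ] word {PTree.node i l} +
        TensorProduct.map LinearMap.id (B i)
          (TensorProduct.map P1 LinearMap.id (Δ (word (l : Multiset PTree)))))
  (hΔm : ∀ X Y : Word, Δ (word X * word Y) = Δ (word X) * Δ (word Y))

include hΔe hΔB hΔm in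
lemma coassoc_tree (i : ℕ) (l : List PTree)
    (IH : TensorProduct.assoc ℚ A A A
        (TensorProduct.map Δ LinearMap.id (Δ (word (l : Multiset PTree))))
      = TensorProduct.map LinearMap.id Δ (Δ (word (l : Multiset PTree)))) :
    TensorProduct.assoc ℚ A A A (TensorProduct.map Δ LinearMap.id (Δ (word {PTree.node i l})))
      = TensorProduct.map LinearMap.id Δ (Δ (word {PTree.node i l})) := by
  have hgD := gD Δ hΔe hΔB hΔm
  set e0 : A := word 0 with he0
  set X : A := word (l : Multiset PTree) with hXdef
  set T : A := word {PTree.node i l} with hTdef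
  set u : A ⊗[ℚ] A := Δ X with hudef
  set D : A ⊗[ℚ] A := TensorProduct.map P1 LinearMap.id u with hDdef
  have hT : Δ T = T ⊗ₜ[ℚ] e0 + e0 ⊗ₜ[ℚ] T + TensorProduct.map LinearMap.id (B i) D :=
    hΔB i l
  have hD : D = u - e0 ⊗ₜ[ℚ] X := hgD X
  -- auxiliary pointwise facts
  have hgw : ∀ w : A ⊗[ℚ] A,
      TensorProduct.map LinearMap.id ((TensorProduct.map P1 LinearMap.id) ∘ₗ Δ) w
        = TensorProduct.map LinearMap.id Δ w
          - TensorProduct.map LinearMap.id (TensorProduct.mk ℚ A A e0) w := by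
    intro w
    induction w using TensorProduct.induction_on with
    | zero => simp
    | tmul a b =>
      simp only [TensorProduct.map_tmul, LinearMap.id_apply, LinearMap.comp_apply,
        TensorProduct.mk_apply, hgD b, TensorProduct.tmul_sub]
    | add x y hx hy =>
      simp only [map_add, hx, hy]; abel
  have hstar : e0 ⊗ₜ[ℚ] D
      + TensorProduct.map LinearMap.id (TensorProduct.mk ℚ A A e0) D
      + TensorProduct.map LinearMap.id ((TensorProduct.map P1 LinearMap.id) ∘ₗ Δ) D
      = TensorProduct.map LinearMap.id Δ u - e0 ⊗ₜ[ℚ] (e0 ⊗ₜ[ℚ] X) := by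
    rw [hgw, hD]
    simp only [map_sub, TensorProduct.map_tmul, LinearMap.id_apply, TensorProduct.mk_apply,
      TensorProduct.tmul_sub, ← hudef]
    abel
  -- LHS pieces
  have t1 : TensorProduct.assoc ℚ A A A (TensorProduct.map Δ LinearMap.id (T ⊗ₜ[ℚ] e0))
      = T ⊗ₜ[ℚ] (e0 ⊗ₜ[ℚ] e0) + e0 ⊗ₜ[ℚ] (T ⊗ₜ[ℚ] e0)
        + TensorProduct.map LinearMap.id (((TensorProduct.mk ℚ A A).flip e0) ∘ₗ B i) D := by
    rw [TensorProduct.map_tmul, LinearMap.id_apply, hT, TensorProduct.add_tmul,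
      TensorProduct.add_tmul, map_add, map_add, TensorProduct.assoc_tmul,
      TensorProduct.assoc_tmul, assoc_tmul_right, tmap_tmap, LinearMap.id_comp]
  have t2 : TensorProduct.assoc ℚ A A A (TensorProduct.map Δ LinearMap.id (e0 ⊗ₜ[ℚ] T))
      = e0 ⊗ₜ[ℚ] (e0 ⊗ₜ[ℚ] T) := by
    rw [TensorProduct.map_tmul, LinearMap.id_apply, hΔe, TensorProduct.assoc_tmul]
  have t3 : TensorProduct.assoc ℚ A A A
        (TensorProduct.map Δ LinearMap.id (TensorProduct.map LinearMap.id (B i) D))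
      = TensorProduct.map LinearMap.id (TensorProduct.map LinearMap.id (B i))
          (TensorProduct.map LinearMap.id Δ u)
        - TensorProduct.map LinearMap.id (TensorProduct.map LinearMap.id (B i))
          (e0 ⊗ₜ[ℚ] (e0 ⊗ₜ[ℚ] X)) := by
    have h31 : TensorProduct.map Δ LinearMap.id (TensorProduct.map LinearMap.id (B i) D)
        = TensorProduct.map
            (TensorProduct.map (LinearMap.id : A →ₗ[ℚ] A) (LinearMap.id : A →ₗ[ℚ] A)) (B i)
            (TensorProduct.map Δ LinearMap.id D) := by
      simp only [tmap_tmap, TensorProduct.map_id, LinearMap.id_comp, LinearMap.comp_id]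
    rw [h31, ← TensorProduct.map_map_assoc, hD, map_sub, map_sub, TensorProduct.map_tmul,
      hΔe, map_sub, IH, TensorProduct.assoc_tmul]
    simp only [LinearMap.id_apply]
  -- RHS pieces
  have s1 : TensorProduct.map LinearMap.id Δ (T ⊗ₜ[ℚ] e0) = T ⊗ₜ[ℚ] (e0 ⊗ₜ[ℚ] e0) := by
    rw [TensorProduct.map_tmul, LinearMap.id_apply, hΔe]
  have s2 : TensorProduct.map LinearMap.id Δ (e0 ⊗ₜ[ℚ] T)
      = e0 ⊗ₜ[ℚ] (T ⊗ₜ[ℚ] e0) + e0 ⊗ₜ[ℚ] (e0 ⊗ₜ[ℚ] T)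
        + e0 ⊗ₜ[ℚ] (TensorProduct.map LinearMap.id (B i) D) := by
    rw [TensorProduct.map_tmul, LinearMap.id_apply, hT, TensorProduct.tmul_add,
      TensorProduct.tmul_add]
  have s3 : TensorProduct.map LinearMap.id Δ (TensorProduct.map LinearMap.id (B i) D)
      = TensorProduct.map LinearMap.id (((TensorProduct.mk ℚ A A).flip e0) ∘ₗ B i) D
        + TensorProduct.map LinearMap.id ((TensorProduct.mk ℚ A A e0) ∘ₗ B i) D
        + TensorProduct.map LinearMap.id
            ((TensorProduct.map LinearMap.id (B i)) ∘ₗ (TensorProduct.map P1 LinearMap.id) ∘ₗ Δ)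
            D := by
    rw [tmap_tmap, LinearMap.id_comp, DB_eq Δ hΔB i, TensorProduct.map_add_right,
      TensorProduct.map_add_right, LinearMap.add_apply, LinearMap.add_apply]
  -- combine the B-terms
  have hR1 : TensorProduct.map LinearMap.id (TensorProduct.map LinearMap.id (B i)) (e0 ⊗ₜ[ℚ] D)
      = e0 ⊗ₜ[ℚ] (TensorProduct.map LinearMap.id (B i) D) := by
    rw [TensorProduct.map_tmul, LinearMap.id_apply]
  have hR2 : TensorProduct.map LinearMap.id (TensorProduct.map LinearMap.id (B i))
        (TensorProduct.map LinearMap.id (TensorProduct.mk ℚ A A e0) D)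
      = TensorProduct.map LinearMap.id ((TensorProduct.mk ℚ A A e0) ∘ₗ B i) D := by
    rw [tmap_tmap, LinearMap.id_comp]
    congr 1
  have hR3 : TensorProduct.map LinearMap.id (TensorProduct.map LinearMap.id (B i))
        (TensorProduct.map LinearMap.id ((TensorProduct.map P1 LinearMap.id) ∘ₗ Δ) D)
      = TensorProduct.map LinearMap.id
          ((TensorProduct.map LinearMap.id (B i)) ∘ₗ (TensorProduct.map P1 LinearMap.id) ∘ₗ Δ)
          D := by
    rw [tmap_tmap, LinearMap.id_comp]
  have hfin : TensorProduct.map LinearMap.id (TensorProduct.map LinearMap.id (B i))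
        (TensorProduct.map LinearMap.id Δ u)
      - TensorProduct.map LinearMap.id (TensorProduct.map LinearMap.id (B i))
        (e0 ⊗ₜ[ℚ] (e0 ⊗ₜ[ℚ] X))
      = e0 ⊗ₜ[ℚ] (TensorProduct.map LinearMap.id (B i) D)
        + TensorProduct.map LinearMap.id ((TensorProduct.mk ℚ A A e0) ∘ₗ B i) D
        + TensorProduct.map LinearMap.id
            ((TensorProduct.map LinearMap.id (B i)) ∘ₗ (TensorProduct.map P1 LinearMap.id) ∘ₗ Δ)
            D := by
    rw [← hR1, ← hR2, ← hR3, ← map_add, ← map_add, hstar, map_sub]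
  rw [hT]
  simp only [map_add]
  rw [t1, t2, t3, s1, s2, s3, hfin]
  abel

end

section
variable (Δ : A →ₗ[ℚ] A ⊗[ℚ] A)
  (hΔe : Δ (word 0) = word 0 ⊗ₜ[ℚ] word 0)
  (hΔB : ∀ (i : ℕ) (l : List PTree),
    Δ (word {PTree.node i l}) =
      word {PTree.node i l} ⊗ₜ[ℚ] word 0 + word 0 ⊗ₜ[ℚ] word {PTree.node i l} +
        TensorProduct.map LinearMap.id (B i)
          (TensorProduct.map P1 LinearMap.id (Δ (word (l : Multiset PTree)))))
  (hΔm : ∀ X Y : Word, Δ (word X * word Y) = Δ (word X) * Δ (word Y))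

include hΔe hΔB hΔm in
lemma coassoc_key : ∀ (n : ℕ) (X : Word), wsize X ≤ n →
    TensorProduct.assoc ℚ A A A (TensorProduct.map Δ LinearMap.id (Δ (word X)))
      = TensorProduct.map LinearMap.id Δ (Δ (word X)) := by
  intro n
  induction n using Nat.strong_induction_on with
  | _ n ih =>
    intro X
    induction X using Multiset.induction with
    | empty =>
      intro _
      rw [hΔe]
      simp only [TensorProduct.map_tmul, LinearMap.id_apply]
      rw [hΔe, TensorProduct.assoc_tmul]
    | cons a s ihs =>
      intro hle
      rcases a with ⟨i, l⟩
      rw [wsize_cons] at hle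
      have hs := ihs (le_trans (Nat.le_add_left _ _) hle)
      have hlt : wsize (l : Multiset PTree) < n :=
        lt_of_lt_of_le (wsize_lt i l) (le_trans (Nat.le_add_right _ _) hle)
      have hhead := coassoc_tree Δ hΔe hΔB hΔm i l
        (by
          rcases Nat.eq_zero_or_pos n with hn | hn
          · omega
          · exact ih (n - 1) (by omega) (l : Multiset PTree) (by omega))
      rw [← Multiset.singleton_add, ← word_mul, Lmul Δ hΔe hΔm, Rmul Δ hΔe hΔm, hs, hhead]

include hΔe hΔB hΔm in
lemma coassoc_all : ∀ a : A,
    TensorProduct.assoc ℚ A A A (TensorProduct.map Δ LinearMap.id (Δ a))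
      = TensorProduct.map LinearMap.id Δ (Δ a) := by
  intro a
  induction a using AddMonoidAlgebra.induction_linear with
  | zero => simp
  | add f g hf hg => rw [map_add, map_add, map_add, map_add, hf, hg]
  | single m q =>
    rw [single_eq_smul, map_smul, map_smul, map_smul, map_smul,
      coassoc_key Δ hΔe hΔB hΔm (wsize m) m le_rfl]

end

theorem words_form_bialgebra
    (Δ : A →ₗ[ℚ] A ⊗[ℚ] A)
    (hΔe : Δ (word 0) = word 0 ⊗ₜ[ℚ] word 0)
    (hΔB : ∀ (i : ℕ) (l : List PTree),
      Δ (word {PTree.node i l}) =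
        word {PTree.node i l} ⊗ₜ[ℚ] word 0 + word 0 ⊗ₜ[ℚ] word {PTree.node i l} +
          TensorProduct.map LinearMap.id (B i)
            (TensorProduct.map P1 LinearMap.id (Δ (word (l : Multiset PTree)))))
    (hΔm : ∀ X Y : Word, Δ (word X * word Y) = Δ (word X) * Δ (word Y)) :
    (∀ a b : A, a * b = b * a) ∧
    (∀ a b : A, Δ (a * b) = Δ a * Δ b) ∧
    Δ 1 = 1 ∧
    (∀ a b : A, ebar (a * b) = ebar a * ebar b) ∧
    ebar 1 = 1 ∧
    (∀ a : A,
      TensorProduct.assoc ℚ A A A (TensorProduct.map Δ LinearMap.id (Δ a)) =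
        TensorProduct.map LinearMap.id Δ (Δ a)) ∧
    (∀ a : A, TensorProduct.rid ℚ A (TensorProduct.map LinearMap.id ebar (Δ a)) = a) ∧
    (∀ a : A, TensorProduct.lid ℚ A (TensorProduct.map ebar LinearMap.id (Δ a)) = a) := by
  refine ⟨fun a b => mul_comm a b, Dmul Δ hΔm, ?_, ebar_mul, ?_,
    coassoc_all Δ hΔe hΔB hΔm, right_counit Δ hΔe hΔB hΔm, left_counit Δ hΔe hΔB hΔm⟩
  · rw [one_eq_word, hΔe, Algebra.TensorProduct.one_def, one_eq_word]
  · rw [one_eq_word, ebar_word0]
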